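/- arXiv:1712.02981 — 3 statements merged into one kernel-verified Lean document; each statement's English description precedes it below -/
import Mathlib

section
/- (Uncertainty Principle) Let H ∈ 𝓗 with ‖H‖ = 1 admit the two expansions H = Σ_{k≥1} α_k φ_k and H = Σ_{l≥1} β_l ψ_l, where the coefficient sequences α and β are absolutely summable. Then for every fixed threshold ε > 0, the mutual coherence μ is strictly positive and (√(‖α‖_{0(ε)}) + ε)² + (√(‖β‖_{0(ε)}) + ε)² ≥ 2/μ. -/
/-!
Write `A = ∑ |α_k|` and `B = ∑ |β_l|`. Expanding `α_k = ⟪φ_k, x⟫ = ∑_l β_l ⟪φ_k, ψ_l⟫` gives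
`|α_k| ≤ μ B`, so Parseval yields `1 = ∑ α_k² ≤ (sup_k |α_k|) A ≤ μ A B`; in particular `μ > 0`.
Cauchy–Schwarz on the at most `‖α‖_{0(ε)}` nonzero coefficients before `N_ε(α)`, together with the
tail bound `ε`, gives `A ≤ √‖α‖_{0(ε)} + ε`, and likewise for `B`. Finally
`2/μ ≤ 2AB ≤ A² + B²`.
-/

open Finset

/-- `N_ε(α) = min {K : ∑_{k ≥ K} |α_k| ≤ ε}` (indices shifted to start at `0`). -/
noncomputable def Neps (α : ℕ → ℝ) (ε : ℝ) : ℕ :=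
  sInf {K : ℕ | ∑' k : ℕ, |α (k + K)| ≤ ε}

open Classical in
/-- The ε-0 norm `‖α‖_{0(ε)}`: the number of nonzero entries of `α` with index `< N_ε(α)`. -/
noncomputable def epsZeroNorm (α : ℕ → ℝ) (ε : ℝ) : ℕ :=
  ((Finset.range (Neps α ε)).filter fun k => α k ≠ 0).card

theorem sum_abs_le_sqrt_card {ι : Type*} (s : Finset ι) {a : ι → ℝ}
    (hsq : ∑ i ∈ s, a i ^ 2 ≤ 1) : ∑ i ∈ s, |a i| ≤ √(#s : ℝ) := by
  rw [Real.le_sqrt (sum_nonneg fun _ _ => abs_nonneg _) (Nat.cast_nonneg _)]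
  calc (∑ i ∈ s, |a i|) ^ 2 ≤ #s * ∑ i ∈ s, |a i| ^ 2 := sq_sum_le_card_mul_sum_sq
    _ ≤ #s * 1 := by
      simp only [sq_abs]
      exact mul_le_mul_of_nonneg_left hsq (Nat.cast_nonneg _)
    _ = #s := mul_one _

section EpsZeroNorm

variable {α : ℕ → ℝ} {ε : ℝ}

-- `∑'` of a non-summable family is `0`, so the tails of every `α` tend to `0`.
theorem tsum_abs_add_Neps_le (hε : 0 < ε) :
    ∑' k, |α (k + Neps α ε)| ≤ ε :=
  Nat.sInf_mem ((tendsto_sum_nat_add fun k => |α k|).eventually_le_const hε).exists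

theorem tsum_abs_le_sqrt_epsZeroNorm_add (hα : Summable fun k => |α k|)
    (hsq : ∀ s : Finset ℕ, ∑ k ∈ s, α k ^ 2 ≤ 1) (hε : 0 < ε) :
    ∑' k, |α k| ≤ √(epsZeroNorm α ε : ℝ) + ε := by
  rw [← hα.sum_add_tsum_nat_add (Neps α ε), epsZeroNorm]
  refine add_le_add ?_ (tsum_abs_add_Neps_le hε)
  rw [← sum_filter_of_ne fun k _ hk => abs_ne_zero.mp hk]
  exact sum_abs_le_sqrt_card _ (hsq _)

end EpsZeroNorm

theorem Orthonormal.inner_eq_of_hasSum {ι 𝕜 E : Type*} [RCLike 𝕜] [NormedAddCommGroup E]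
    [InnerProductSpace 𝕜 E] {v : ι → E} (hv : Orthonormal 𝕜 v) {c : ι → 𝕜} {x : E}
    (h : HasSum (fun i => c i • v i) x) (i : ι) : inner 𝕜 (v i) x = c i := by
  have hinner : HasSum (fun j => c j * inner 𝕜 (v i) (v j)) (inner 𝕜 (v i) x) := by
    simpa only [innerSL_apply_apply, inner_smul_right] using h.mapL (innerSL 𝕜 (v i))
  have hsingle : HasSum (fun j => c j * inner 𝕜 (v i) (v j)) (c i) := by
    convert hasSum_single (f := fun j => c j * inner 𝕜 (v i) (v j)) i fun j hj => by
      rw [hv.inner_eq_zero hj.symm, mul_zero]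
    rw [inner_self_eq_norm_sq_to_K, hv.1 i]
    simp
  exact hinner.unique hsingle

theorem HilbertBasis.hasSum_sq_of_hasSum {ι E : Type*} [NormedAddCommGroup E]
    [InnerProductSpace ℝ E] (b : HilbertBasis ι ℝ E) {c : ι → ℝ} {x : E}
    (h : HasSum (fun i => c i • b i) x) : HasSum (fun i => c i ^ 2) (‖x‖ ^ 2) := by
  have hc := b.orthonormal.inner_eq_of_hasSum h
  rw [← real_inner_self_eq_norm_sq]
  have hsq : (fun i => c i ^ 2) = fun i => inner ℝ x (b i) * inner ℝ (b i) x := by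
    ext i
    rw [real_inner_comm (b i), hc, sq]
  exact hsq ▸ b.hasSum_inner_mul_inner x x

section MutualCoherence

variable {ι ι' E : Type*} [NormedAddCommGroup E] [InnerProductSpace ℝ E]

noncomputable def mutualCoherence (φ : ι → E) (ψ : ι' → E) : ℝ :=
  ⨆ p : ι × ι', |inner ℝ (φ p.1) (ψ p.2)|

variable {φ : ι → E} {ψ : ι' → E}

theorem Orthonormal.abs_inner_le_mutualCoherence (hφ : Orthonormal ℝ φ)
    (hψ : Orthonormal ℝ ψ) (k : ι) (l : ι') :
    |inner ℝ (φ k) (ψ l)| ≤ mutualCoherence φ ψ := by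
  refine le_ciSup (f := fun p : ι × ι' => |inner ℝ (φ p.1) (ψ p.2)|) ⟨1, ?_⟩ (k, l)
  rintro _ ⟨p, rfl⟩
  simpa [hφ.1, hψ.1] using abs_real_inner_le_norm (φ p.1) (ψ p.2)

theorem Orthonormal.abs_inner_le_mutualCoherence_mul_tsum_abs (hφ : Orthonormal ℝ φ)
    (hψ : Orthonormal ℝ ψ) {β : ι' → ℝ} {x : E} (hβ : Summable fun l => |β l|)
    (hrep : HasSum (fun l => β l • ψ l) x) (k : ι) :
    |inner ℝ (φ k) x| ≤ mutualCoherence φ ψ * ∑' l, |β l| := by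
  have hinner : HasSum (fun l => β l * inner ℝ (φ k) (ψ l)) (inner ℝ (φ k) x) := by
    simpa only [innerSL_apply_apply, real_inner_smul_right] using hrep.mapL (innerSL ℝ (φ k))
  rw [mul_comm, ← tsum_mul_right]
  refine hinner.norm_le_of_bounded (hβ.mul_right _).hasSum fun l => ?_
  rw [Real.norm_eq_abs, abs_mul]
  exact mul_le_mul_of_nonneg_left (hφ.abs_inner_le_mutualCoherence hψ k l) (abs_nonneg _)

end MutualCoherence

theorem tsum_sq_le_mul_tsum_abs {ι : Type*} {a : ι → ℝ} {M : ℝ}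
    (ha : Summable fun i => |a i|) (hM : ∀ i, |a i| ≤ M) :
    ∑' i, a i ^ 2 ≤ M * ∑' i, |a i| := by
  have hle : ∀ i, a i ^ 2 ≤ M * |a i| := fun i => by
    rw [← sq_abs, sq]
    exact mul_le_mul_of_nonneg_right (hM i) (abs_nonneg _)
  rw [← tsum_mul_left]
  exact ((ha.mul_left M).of_nonneg_of_le (fun i => sq_nonneg _) hle).tsum_le_tsum hle
    (ha.mul_left M)

theorem uncertainty_principle_pairs_of_bases_general
    {H : Type*} [NormedAddCommGroup H] [InnerProductSpace ℝ H]
    (φ ψ : HilbertBasis ℕ ℝ H) (x : H) (hx : ‖x‖ = 1)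
    (α β : ℕ → ℝ)
    (hα : Summable fun k => |α k|) (hβ : Summable fun l => |β l|)
    (hrepα : HasSum (fun k => α k • (φ k : H)) x)
    (hrepβ : HasSum (fun l => β l • (ψ l : H)) x)
    (ε : ℝ) (hε : 0 < ε) :
    0 < (⨆ p : ℕ × ℕ, |(inner ℝ (φ p.1) (ψ p.2) : ℝ)|) ∧
      2 / (⨆ p : ℕ × ℕ, |(inner ℝ (φ p.1) (ψ p.2) : ℝ)|) ≤
        (Real.sqrt (epsZeroNorm α ε) + ε) ^ 2 + (Real.sqrt (epsZeroNorm β ε) + ε) ^ 2 := by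
  change 0 < mutualCoherence φ ψ ∧ 2 / mutualCoherence φ ψ ≤ _
  set μ := mutualCoherence φ ψ
  have hParα : HasSum (fun k => α k ^ 2) 1 := by
    simpa [hx] using φ.hasSum_sq_of_hasSum hrepα
  have hParβ : HasSum (fun l => β l ^ 2) 1 := by
    simpa [hx] using ψ.hasSum_sq_of_hasSum hrepβ
  have hαμ : ∀ k, |α k| ≤ μ * ∑' l, |β l| := fun k => by
    simpa only [φ.orthonormal.inner_eq_of_hasSum hrepα k] using
      φ.orthonormal.abs_inner_le_mutualCoherence_mul_tsum_abs ψ.orthonormal hβ hrepβ k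
  have hkey : 1 ≤ μ * (∑' l, |β l|) * ∑' k, |α k| :=
    hParα.tsum_eq ▸ tsum_sq_le_mul_tsum_abs hα hαμ
  have hA := tsum_abs_le_sqrt_epsZeroNorm_add hα
    (fun s => sum_le_hasSum s (fun _ _ => sq_nonneg _) hParα) hε
  have hB := tsum_abs_le_sqrt_epsZeroNorm_add hβ
    (fun s => sum_le_hasSum s (fun _ _ => sq_nonneg _) hParβ) hε
  set A := ∑' k, |α k|
  set B := ∑' l, |β l|
  have hA0 : 0 ≤ A := tsum_nonneg fun _ => abs_nonneg _
  have hB0 : 0 ≤ B := tsum_nonneg fun _ => abs_nonneg _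
  have hμ : 0 < μ := by
    by_contra! h
    nlinarith [mul_nonneg hA0 hB0]
  refine ⟨hμ, ?_⟩
  calc 2 / μ ≤ 2 * A * B := by
        rw [div_le_iff₀ hμ]
        linarith
    _ ≤ A ^ 2 + B ^ 2 := two_mul_le_add_sq A B
    _ ≤ _ := add_le_add (pow_le_pow_left₀ hA0 hA 2) (pow_le_pow_left₀ hB0 hB 2)

/-- **Uncertainty principle** for pairs of orthonormal bases of a separable Hilbert space:
if `‖H‖ = 1`, `H = ∑ α_k φ_k = ∑ β_l ψ_l` with absolutely summable coefficients, then the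
mutual coherence `μ = sup_{k,l} |⟨φ_k, ψ_l⟩|` is positive and
`(√‖α‖₀ε + ε)² + (√‖β‖₀ε + ε)² ≥ 2/μ`. -/
theorem uncertainty_principle_pairs_of_bases
    {H : Type*} [NormedAddCommGroup H] [InnerProductSpace ℝ H] [CompleteSpace H]
    (φ ψ : HilbertBasis ℕ ℝ H) (x : H) (hx : ‖x‖ = 1)
    (α β : ℕ → ℝ)
    (hα : Summable fun k => |α k|) (hβ : Summable fun l => |β l|)
    (hrepα : HasSum (fun k => α k • (φ k : H)) x)
    (hrepβ : HasSum (fun l => β l • (ψ l : H)) x)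
    (ε : ℝ) (hε : 0 < ε) :
    0 < (⨆ p : ℕ × ℕ, |(inner ℝ (φ p.1) (ψ p.2) : ℝ)|) ∧
      2 / (⨆ p : ℕ × ℕ, |(inner ℝ (φ p.1) (ψ p.2) : ℝ)|) ≤
        (Real.sqrt (epsZeroNorm α ε) + ε) ^ 2 + (Real.sqrt (epsZeroNorm β ε) + ε) ^ 2 :=
  uncertainty_principle_pairs_of_bases_general φ ψ x hx α β hα hβ hrepα hrepβ ε hε
end

section
/- Let H ∈ 𝓗 with ‖H‖ = 1 admit the two expansions H = Σ_{k≥1} α_k φ_k and H = Σ_{l≥1} β_l ψ_l, where the coefficient sequences α and β are absolutely summable. Then for every fixed threshold ε > 0, 1 ≤ μ · (Σ_{k ∈ Γ_ε(α)} |α_k| + ε) · (Σ_{l ∈ Γ_ε(β)} |β_l| + ε). -/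
open Classical in
/-- The ε-support `Γ_ε(α)`: indices `k < N_ε(α)` with `α_k ≠ 0`, as a finite set. -/
noncomputable def epsSupport (α : ℕ → ℝ) (ε : ℝ) : Finset ℕ :=
  (Finset.range (Neps α ε)).filter fun k => α k ≠ 0

open scoped InnerProductSpace

theorem tsum_abs_nat_add_Neps_le (α : ℕ → ℝ) {ε : ℝ} (hε : 0 < ε) :
    ∑' k, |α (k + Neps α ε)| ≤ ε := by
  obtain ⟨K, hK⟩ := ((tendsto_sum_nat_add fun k => |α k|).eventually (gt_mem_nhds hε)).exists
  exact Nat.sInf_mem (s := {K : ℕ | ∑' k : ℕ, |α (k + K)| ≤ ε}) ⟨K, hK.le⟩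

theorem sum_epsSupport_abs_eq_sum_range (α : ℕ → ℝ) (ε : ℝ) :
    ∑ k ∈ epsSupport α ε, |α k| = ∑ k ∈ Finset.range (Neps α ε), |α k| := by
  classical
  refine Finset.sum_filter_of_ne fun k _ hk hα => hk ?_
  simp [hα]

theorem tsum_abs_le_sum_epsSupport_add (α : ℕ → ℝ) (hα : Summable fun k => |α k|) {ε : ℝ}
    (hε : 0 < ε) : ∑' k, |α k| ≤ (∑ k ∈ epsSupport α ε, |α k|) + ε := by
  rw [← hα.sum_add_tsum_nat_add (Neps α ε), sum_epsSupport_abs_eq_sum_range]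
  exact add_le_add_right (tsum_abs_nat_add_Neps_le α hε) _

theorem Orthonormal.abs_inner_le_iSup {ι κ E : Type*} [NormedAddCommGroup E]
    [InnerProductSpace ℝ E] {v : ι → E} {w : κ → E} (hv : Orthonormal ℝ v)
    (hw : Orthonormal ℝ w) (i : ι) (j : κ) :
    |⟪v i, w j⟫_ℝ| ≤ ⨆ p : ι × κ, |⟪v p.1, w p.2⟫_ℝ| := by
  refine le_ciSup (f := fun p : ι × κ => |⟪v p.1, w p.2⟫_ℝ|) ⟨1, ?_⟩ (i, j)
  rintro _ ⟨p, rfl⟩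
  simpa [hv.1, hw.1] using abs_real_inner_le_norm (v p.1) (w p.2)

theorem abs_inner_le_mul_tsum_abs_of_hasSum {ι E : Type*} [NormedAddCommGroup E]
    [InnerProductSpace ℝ E] {u : ι → E} {a : ι → ℝ} {x : E} (y : E)
    (hx : HasSum (fun k => a k • u k) x) (ha : Summable fun k => |a k|) {M : ℝ}
    (hM : ∀ k, |⟪y, u k⟫_ℝ| ≤ M) : |⟪y, x⟫_ℝ| ≤ M * ∑' k, |a k| := by
  have hsum : HasSum (fun k => a k * ⟪y, u k⟫_ℝ) ⟪y, x⟫_ℝ := by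
    simpa [inner_smul_right] using (innerSL ℝ y).hasSum hx
  rw [← tsum_mul_left]
  refine hsum.norm_le_of_bounded (ha.mul_left M).hasSum fun k => ?_
  rw [Real.norm_eq_abs, abs_mul, mul_comm M]
  exact mul_le_mul_of_nonneg_left (hM k) (abs_nonneg _)

theorem one_le_mu_mul_epsSupport_sums_general
    {H : Type*} [NormedAddCommGroup H] [InnerProductSpace ℝ H]
    (φ ψ : HilbertBasis ℕ ℝ H) (x : H) (hx : ‖x‖ = 1)
    (α β : ℕ → ℝ)
    (hα : Summable fun k => |α k|) (hβ : Summable fun l => |β l|)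
    (hrepα : HasSum (fun k => α k • (φ k : H)) x)
    (hrepβ : HasSum (fun l => β l • (ψ l : H)) x)
    (ε : ℝ) (hε : 0 < ε) :
    1 ≤ (⨆ p : ℕ × ℕ, |(inner ℝ (φ p.1) (ψ p.2) : ℝ)|) *
        ((∑ k ∈ epsSupport α ε, |α k|) + ε) * ((∑ l ∈ epsSupport β ε, |β l|) + ε) := by
  set μ := ⨆ p : ℕ × ℕ, |⟪φ p.1, ψ p.2⟫_ℝ|
  have hcoh : ∀ k l, |⟪φ k, ψ l⟫_ℝ| ≤ μ := φ.orthonormal.abs_inner_le_iSup ψ.orthonormal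
  have hψx : ∀ l, |⟪ψ l, x⟫_ℝ| ≤ μ * ∑' k, |α k| := fun l =>
    abs_inner_le_mul_tsum_abs_of_hasSum (ψ l) hrepα hα fun k =>
      real_inner_comm (ψ l) (φ k) ▸ hcoh k l
  have hxx : |⟪x, x⟫_ℝ| ≤ μ * (∑' k, |α k|) * ∑' l, |β l| :=
    abs_inner_le_mul_tsum_abs_of_hasSum x hrepβ hβ fun l => real_inner_comm (ψ l) x ▸ hψx l
  rw [real_inner_self_eq_norm_sq, hx, one_pow, abs_one] at hxx
  refine hxx.trans ?_
  have hμ : 0 ≤ μ := (abs_nonneg _).trans (hcoh 0 0)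
  gcongr
  · exact tsum_abs_le_sum_epsSupport_add α hα hε
  · exact tsum_abs_le_sum_epsSupport_add β hβ hε

/-- If `‖H‖ = 1`, `H = ∑ α_k φ_k = ∑ β_l ψ_l` with absolutely summable coefficients, then
for every ε > 0, `1 ≤ μ (∑_{k ∈ Γ_ε(α)} |α_k| + ε)(∑_{l ∈ Γ_ε(β)} |β_l| + ε)`, where
`μ = sup_{k,l} |⟨φ_k, ψ_l⟩|` is the mutual coherence. -/
theorem one_le_mu_mul_epsSupport_sums
    {H : Type*} [NormedAddCommGroup H] [InnerProductSpace ℝ H] [CompleteSpace H]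
    (φ ψ : HilbertBasis ℕ ℝ H) (x : H) (hx : ‖x‖ = 1)
    (α β : ℕ → ℝ)
    (hα : Summable fun k => |α k|) (hβ : Summable fun l => |β l|)
    (hrepα : HasSum (fun k => α k • (φ k : H)) x)
    (hrepβ : HasSum (fun l => β l • (ψ l : H)) x)
    (ε : ℝ) (hε : 0 < ε) :
    1 ≤ (⨆ p : ℕ × ℕ, |(inner ℝ (φ p.1) (ψ p.2) : ℝ)|) *
        ((∑ k ∈ epsSupport α ε, |α k|) + ε) * ((∑ l ∈ epsSupport β ε, |β l|) + ε) :=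
  one_le_mu_mul_epsSupport_sums_general φ ψ x hx α β hα hβ hrepα hrepβ ε hε
end

section
/- Let A be a real m×n matrix, T ⊆ {1,…,n}, and θ ∈ ℝⁿ a vector supported on T. Suppose the submatrix A_T consisting of the columns of A indexed by T has full column rank, and suppose there exists a vector π ∈ ℝⁿ such that: (1) π is in the row space of A, i.e. π = Aᵀw for some w ∈ ℝᵐ; (2) π_t = sgn(θ_t) for every t ∈ T; (3) |π_t| < 1 for every t ∉ T. Then θ is the unique minimizer of ‖x‖₁ over all x ∈ ℝⁿ satisfying Ax = Aθ. -/
/-!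
Since `A x = A θ`, the certificate gives `⟪π, x⟫ = ⟪w, A x⟫ = ⟪w, A θ⟫ = ⟪π, θ⟫ = ‖θ‖₁`.
Since `|π| ≤ 1` coordinatewise, `⟪π, x⟫ ≤ ‖x‖₁`, so `‖x‖₁ ≤ ‖θ‖₁` forces equality termwise, and
`|π_t| < 1` off `T` then forces `x` to vanish off `T`. Hence `x - θ` is supported on `T` and lies
in the kernel of `A`, so it is zero because the columns `A_T` are independent.
-/

open Matrix

namespace Real

theorem sign_mul_self (r : ℝ) : sign r * r = |r| := by
  rcases lt_trichotomy r 0 with hr | rfl | hr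
  · rw [sign_of_neg hr, abs_of_neg hr, neg_one_mul]
  · simp
  · rw [sign_of_pos hr, abs_of_pos hr, one_mul]

theorem abs_sign_le_one (r : ℝ) : |sign r| ≤ 1 := by
  rcases sign_apply_eq r with h | h | h <;> simp [h]

end Real

theorem mul_le_abs_of_abs_le_one {a b : ℝ} (ha : |a| ≤ 1) : a * b ≤ |b| :=
  calc a * b ≤ |a| * |b| := (le_abs_self _).trans (abs_mul a b).le
    _ ≤ |b| := mul_le_of_le_one_left (abs_nonneg b) ha

theorem mul_lt_abs_of_abs_lt_one {a b : ℝ} (ha : |a| < 1) (hb : b ≠ 0) : a * b < |b| :=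
  calc a * b ≤ |a| * |b| := (le_abs_self _).trans (abs_mul a b).le
    _ < |b| := mul_lt_of_lt_one_left (abs_pos.mpr hb) ha

section DualNorm

variable {ι : Type*} [Fintype ι] {π x : ι → ℝ}

theorem dotProduct_le_sum_abs (hπ : ∀ t, |π t| ≤ 1) : π ⬝ᵥ x ≤ ∑ t, |x t| :=
  Finset.sum_le_sum fun t _ => mul_le_abs_of_abs_le_one (hπ t)

theorem eq_zero_of_sum_abs_le_dotProduct (hπ : ∀ t, |π t| ≤ 1) (hx : ∑ t, |x t| ≤ π ⬝ᵥ x)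
    {t : ι} (ht : |π t| < 1) : x t = 0 := by
  by_contra hxt
  have : π ⬝ᵥ x < ∑ t, |x t| :=
    Finset.sum_lt_sum (fun s _ => mul_le_abs_of_abs_le_one (hπ s))
      ⟨t, Finset.mem_univ t, mul_lt_abs_of_abs_lt_one ht hxt⟩
  exact this.not_ge hx

theorem dotProduct_eq_sum_abs_of_eq_sign (h : ∀ t, x t ≠ 0 → π t = Real.sign (x t)) :
    π ⬝ᵥ x = ∑ t, |x t| := by
  refine Finset.sum_congr rfl fun t _ => ?_
  by_cases hxt : x t = 0
  · simp [hxt]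
  · rw [h t hxt, Real.sign_mul_self]

end DualNorm

theorem Matrix.eq_zero_of_mulVec_eq_zero_of_linearIndependent_cols {R m ι : Type*}
    [CommRing R] [Fintype ι] {A : Matrix m ι R} {T : Finset ι}
    (hT : LinearIndependent R (fun t : T => fun i => A i t)) {v : ι → R}
    (hv : ∀ t ∉ T, v t = 0) (hAv : A *ᵥ v = 0) : v = 0 := by
  have hcomb : ∑ t : T, v t • (fun i => A i t) = 0 := by
    funext i
    have hrow : ∑ t, v t * A i t = 0 := by
      simpa [mulVec, dotProduct, mul_comm] using congrFun hAv i
    simp only [Finset.sum_apply, Pi.smul_apply, smul_eq_mul, Pi.zero_apply]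
    rw [Finset.sum_coe_sort T (fun t => v t * A i t),
      Finset.sum_subset (Finset.subset_univ T) fun t _ ht => by rw [hv t ht, zero_mul], hrow]
  funext t
  by_cases ht : t ∈ T
  · exact Fintype.linearIndependent_iff.mp hT (fun t : T => v t) hcomb ⟨t, ht⟩
  · exact hv t ht

/-- **Dual certificate implies ℓ¹-uniqueness.** If `θ` is supported on `T`, the columns of `A`
indexed by `T` are linearly independent, and some vector `π = Aᵀ w` in the row space of `A`
satisfies `π_t = sgn(θ_t)` on `T` and `|π_t| < 1` off `T`, then `θ` is the unique minimizer of
`‖x‖₁` subject to `A x = A θ`. -/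
theorem dual_certificate_l1_unique_minimizer
    {m n : ℕ} (A : Matrix (Fin m) (Fin n) ℝ) (T : Finset (Fin n)) (θ : Fin n → ℝ)
    (hsupp : ∀ t, θ t ≠ 0 → t ∈ T)
    (hrank : LinearIndependent ℝ (fun t : {t // t ∈ T} => fun i : Fin m => A i (t : Fin n)))
    (π : Fin n → ℝ) (w : Fin m → ℝ)
    (hπrow : π = fun j => ∑ i, A i j * w i)
    (hπsign : ∀ t ∈ T, π t = Real.sign (θ t))
    (hπlt : ∀ t ∉ T, |π t| < 1) :
    ∀ x : Fin n → ℝ, A.mulVec x = A.mulVec θ → x ≠ θ →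
      (∑ t, |θ t|) < ∑ t, |x t| := by
  intro x hAx hxne
  by_contra! hle
  have hθ_off : ∀ t ∉ T, θ t = 0 := fun t ht => by_contra fun h => ht (hsupp t h)
  have hπ_le : ∀ t, |π t| ≤ 1 := fun t => by
    by_cases ht : t ∈ T
    · exact hπsign t ht ▸ Real.abs_sign_le_one _
    · exact (hπlt t ht).le
  have hπ_vecMul : π = w ᵥ* A := by
    rw [hπrow]; funext j; simp [vecMul, dotProduct, mul_comm]
  have hπx : π ⬝ᵥ x = ∑ t, |θ t| := by
    rw [hπ_vecMul, ← dotProduct_mulVec, hAx, dotProduct_mulVec, ← hπ_vecMul]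
    exact dotProduct_eq_sum_abs_of_eq_sign fun t h => hπsign t (hsupp t h)
  have hx_off : ∀ t ∉ T, x t = 0 := fun t ht =>
    eq_zero_of_sum_abs_le_dotProduct hπ_le (hle.trans hπx.ge) (hπlt t ht)
  refine hxne (sub_eq_zero.mp (eq_zero_of_mulVec_eq_zero_of_linearIndependent_cols hrank
    (fun t ht => by rw [Pi.sub_apply, hx_off t ht, hθ_off t ht, sub_zero]) ?_))
  rw [mulVec_sub, hAx, sub_self]
end
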